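/- arXiv:cs/0604032 — 2 statements merged into one kernel-verified Lean document; each statement's English description precedes it below -/
import Mathlib

section
/- Let I be a nonempty index set and for each i ∈ I let S_i be a set of finite tuples of real numbers. Then the intersection over i ∈ I of the subgroups of F generated by {w_s : s ∈ S_i} equals the subgroup of F generated by {w_s : s ∈ ⋂_{i∈I} S_i}. -/
/-- The free group `F` on the generating set
`X = {x_{(i,s)} : i ∈ ℕ, s ∈ ℝ} ∪ {y}`. -/
abbrev F : Type := FreeGroup ((ℕ × ℝ) ⊕ Unit)

/-- The generator `x_{(i,s)}`. -/
def xg (p : ℕ × ℝ) : F := FreeGroup.of (Sum.inl p)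

/-- The generator `y`. -/
def yg : F := FreeGroup.of (Sum.inr ())

/-- The word `x_{(1,r_1)} ⋯ x_{(k,r_k)}` for a tuple `r = (r_1, …, r_k)`. -/
def cword (r : List ℝ) : F :=
  (List.zipWith (fun i a => xg (i + 1, a)) (List.range r.length) r).prod

/-- The word `w_r = x_{(k,r_k)}⁻¹ ⋯ x_{(1,r_1)}⁻¹ · y · x_{(1,r_1)} ⋯ x_{(k,r_k)}`. -/
def wword (r : List ℝ) : F := (cword r)⁻¹ * yg * cword r

/-! The word `w_r` is the conjugate of `y` by the element `x_{(1,r_1)} ⋯ x_{(k,r_k)}` of the free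
group `Q` on the `x`-letters, and distinct tuples give distinct elements of `Q`. Sending `x_a` to
the generator `a` of `Q` and `y` to the basis element `1` of `F(Q)` defines a homomorphism
`F → F(Q) ⋊ Q`, where `Q` permutes the basis of `F(Q)` by right translation; it maps the conjugate
of `y` by `c ∈ Q` to the basis element `c`. Hence the `w_r` form a free basis of the subgroup they
generate. In a free group an element lies in the subgroup generated by a set of basis elements iff
every letter of its reduced word does, so such subgroups intersect like the sets of basis
elements, and the injective map `F(tuples) → F` carries this over to `F`. -/

namespace FreeGroup

variable {α : Type*}

theorem prod_map_of_eq_mk (L : List α) : (L.map of).prod = mk (L.map (·, true)) := by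
  rw [← lift_of_apply (mk _), lift_mk, List.map_map]
  rfl

theorem toWord_prod_map_of [DecidableEq α] (L : List α) :
    (L.map of).prod.toWord = L.map (·, true) := by
  rw [prod_map_of_eq_mk, toWord_mk, IsReduced.reduce_eq]
  simp only [IsReduced, List.isChain_map]
  exact List.isChain_iff_getElem.mpr fun _ _ _ => trivial

theorem prod_map_of_injective : Function.Injective fun L : List α => (L.map of).prod := by
  classical
  intro L L' h
  have hword := congrArg toWord h
  simp only [toWord_prod_map_of] at hword
  exact List.map_injective_iff.mpr (fun a b h => congrArg Prod.fst h) hword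

theorem mem_closure_image_of_iff [DecidableEq α] {T : Set α} {g : FreeGroup α} :
    g ∈ Subgroup.closure (of '' T) ↔ ∀ a ∈ g.toWord, a.1 ∈ T := by
  constructor
  · intro hg
    induction hg using Subgroup.closure_induction with
    | mem x hx =>
      obtain ⟨a, ha, rfl⟩ := hx
      simpa [toWord_of] using ha
    | one => simp
    | mul x y _ _ hx hy =>
      intro a ha
      rcases List.mem_append.1 ((toWord_mul_sublist x y).subset ha) with h | h
      exacts [hx a h, hy a h]
    | inv x _ hx =>
      intro a ha
      rw [toWord_inv, invRev, List.mem_reverse, List.mem_map] at ha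
      obtain ⟨b, hb, rfl⟩ := ha
      exact hx b hb
  · intro h
    rw [← mk_toWord (x := g), ← lift_of_apply (mk _), lift_mk]
    refine Subgroup.list_prod_mem _ fun x hx => ?_
    obtain ⟨⟨a, b⟩, hab, rfl⟩ := List.mem_map.1 hx
    have ha : of a ∈ Subgroup.closure (of '' T) := Subgroup.subset_closure ⟨a, h _ hab, rfl⟩
    cases b
    exacts [inv_mem ha, ha]

theorem iInf_closure_image_of {ι : Sort*} [Nonempty ι] (S : ι → Set α) :
    ⨅ i, Subgroup.closure (of '' S i) = Subgroup.closure (of '' ⋂ i, S i) := by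
  classical
  ext g
  simp only [Subgroup.mem_iInf, mem_closure_image_of_iff, Set.mem_iInter]
  exact ⟨fun h a ha i => h i a ha, fun h i a ha => h a ha i⟩

end FreeGroup

section Conjugates

variable {α : Type*}

open FreeGroup

def rightTranslationAut : FreeGroup α →* MulAut (FreeGroup (FreeGroup α)) where
  toFun q := freeGroupCongr (Equiv.mulRight q⁻¹)
  map_one' := by ext; simp
  map_mul' a b := by
    rw [MulAut.mul_def, freeGroupCongr_trans]
    congr 1
    ext
    simp [mul_assoc]

def yConj (c : FreeGroup α) : FreeGroup (α ⊕ Unit) :=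
  (map Sum.inl c)⁻¹ * of (Sum.inr ()) * map Sum.inl c

def semidirectRep :
    FreeGroup (α ⊕ Unit) →* FreeGroup (FreeGroup α) ⋊[rightTranslationAut] FreeGroup α :=
  lift (Sum.elim (fun a => SemidirectProduct.inr (of a)) fun _ => SemidirectProduct.inl (of 1))

theorem semidirectRep_comp_map_inl :
    (semidirectRep (α := α)).comp (map Sum.inl) = SemidirectProduct.inr :=
  ext_hom _ _ fun _ => by simp [semidirectRep]

theorem semidirectRep_yConj (c : FreeGroup α) :
    semidirectRep (yConj c) = SemidirectProduct.inl (of c) := by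
  have hc : semidirectRep (map Sum.inl c) = SemidirectProduct.inr c :=
    DFunLike.congr_fun semidirectRep_comp_map_inl c
  have hy : semidirectRep (of (Sum.inr () : α ⊕ Unit)) = SemidirectProduct.inl (of 1) :=
    lift_apply_of
  have hφ : (rightTranslationAut c)⁻¹ (of 1) = of c := by
    rw [← _root_.map_inv]
    simp [rightTranslationAut]
  rw [yConj, _root_.map_mul, _root_.map_mul, _root_.map_inv, hc, hy,
    ← _root_.map_inv SemidirectProduct.inr,
    ← SemidirectProduct.inl_aut_inv, hφ]

theorem lift_yConj_injective : Function.Injective (lift (yConj (α := α))) := by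
  have h : semidirectRep.comp (lift yConj) =
      SemidirectProduct.inl (φ := rightTranslationAut (α := α)) :=
    ext_hom _ _ fun c => by simp [semidirectRep_yConj]
  have hinj := SemidirectProduct.inl_injective (φ := rightTranslationAut (α := α))
  rw [← h, MonoidHom.coe_comp] at hinj
  exact hinj.of_comp

end Conjugates

def xletters (r : List ℝ) : List (ℕ × ℝ) :=
  List.zipWith (fun i a => (i + 1, a)) (List.range r.length) r

theorem map_snd_xletters (r : List ℝ) : (xletters r).map Prod.snd = r := by
  conv_rhs => rw [← List.map_snd_zip (l₁ := List.range r.length) (l₂ := r) (by simp)]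
  rw [xletters, List.map_zipWith, List.zip_eq_zipWith, List.map_zipWith]

theorem xletters_injective : Function.Injective xletters :=
  Function.LeftInverse.injective map_snd_xletters

def xword (r : List ℝ) : FreeGroup (ℕ × ℝ) := ((xletters r).map FreeGroup.of).prod

theorem xword_injective : Function.Injective xword :=
  FreeGroup.prod_map_of_injective.comp xletters_injective

theorem cword_eq_map_xword (r : List ℝ) : cword r = FreeGroup.map Sum.inl (xword r) := by
  simp [cword, xword, xletters, xg, map_list_prod, List.map_zipWith]

theorem wword_eq_yConj_xword (r : List ℝ) : wword r = yConj (xword r) := by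
  rw [wword, yConj, cword_eq_map_xword, yg]

theorem lift_wword_injective : Function.Injective (FreeGroup.lift wword) := by
  have h : FreeGroup.lift wword = (FreeGroup.lift yConj).comp (FreeGroup.map xword) :=
    FreeGroup.ext_hom _ _ fun r => by simp [wword_eq_yConj_xword]
  rw [h, MonoidHom.coe_comp]
  exact lift_yConj_injective.comp (FreeGroup.map_injective xword_injective)

theorem closure_wword_image_eq_map (T : Set (List ℝ)) :
    Subgroup.closure (wword '' T) =
      (Subgroup.closure (FreeGroup.of '' T)).map (FreeGroup.lift wword) := by
  rw [MonoidHom.map_closure, Set.image_image]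
  simp

/-- For a nonempty family of sets `S i` of finite real tuples, the intersection of the
subgroups generated by `{w_s : s ∈ S i}` is the subgroup generated by
`{w_s : s ∈ ⋂ i, S i}`. -/
theorem iInf_closure_wword_eq_closure_wword_iInter
    {I : Type*} [Nonempty I] (S : I → Set (List ℝ)) :
    (⨅ i, Subgroup.closure (wword '' S i)) =
      Subgroup.closure (wword '' ⋂ i, S i) := by
  simp_rw [closure_wword_image_eq_map]
  rw [← Subgroup.map_iInf _ lift_wword_injective, FreeGroup.iInf_closure_image_of]
end

section
/- Fix natural numbers D, i, j with 1 ≤ j < i ≤ D. Let W be the subgroup of FreeGroup(X) generated by {w_r : r ∈ ℝ^D, r_i = r_j}, and let L be the subgroup of C generated by π(w_{(0,…,0)}) together with the images in C of the products a_{(i,s)} · a_{(j,s)} for all s ∈ ℝ and the images of all generators a_{(ℓ,s)} with s ∈ ℝ and ℓ ∈ ℕ, ℓ ∉ {i, j}. Then the preimage of L under π (Subgroup.comap π L) equals W. -/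
/-- The generating set `X = {x_{(i,s)} : i ∈ ℕ, s ∈ ℝ} ∪ {y}`. -/
abbrev XT : Type := (ℕ × ℝ) ⊕ Unit

/-- Generators of the presented group `C`: the generators of `X`, together with the
stable letters `a_{(i,t)}` (`i ∈ ℕ`, `t ∈ ℝ`) and `m_{(i,t)}` (`i ∈ ℕ`, `t ≠ 0`). -/
abbrev GenC : Type := XT ⊕ ((ℕ × ℝ) ⊕ (ℕ × {t : ℝ // t ≠ 0}))

def xc (p : ℕ × ℝ) : FreeGroup GenC := FreeGroup.of (Sum.inl (Sum.inl p))
def yc : FreeGroup GenC := FreeGroup.of (Sum.inl (Sum.inr ()))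
def ac (p : ℕ × ℝ) : FreeGroup GenC := FreeGroup.of (Sum.inr (Sum.inl p))
def mcg (i : ℕ) (t : {t : ℝ // t ≠ 0}) : FreeGroup GenC :=
  FreeGroup.of (Sum.inr (Sum.inr (i, t)))

/-- The relators of `C`: `a_{(i,t)}` conjugates `x_{(i,s)}` to `x_{(i,s+t)}` and
commutes with the remaining generators of `X`; `m_{(i,t)}` (`t ≠ 0`) conjugates
`x_{(i,s)}` to `x_{(i,s·t)}` and commutes with the remaining generators of `X`. -/
def relsC : Set (FreeGroup GenC) :=
  {g | ∃ (i : ℕ) (s t : ℝ), g = ac (i, t) * xc (i, s) * (ac (i, t))⁻¹ * (xc (i, s + t))⁻¹} ∪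
  {g | ∃ (i j : ℕ) (s t : ℝ), j ≠ i ∧
        g = ac (i, t) * xc (j, s) * (ac (i, t))⁻¹ * (xc (j, s))⁻¹} ∪
  {g | ∃ (i : ℕ) (t : ℝ), g = ac (i, t) * yc * (ac (i, t))⁻¹ * yc⁻¹} ∪
  {g | ∃ (i : ℕ) (s : ℝ) (t : {t : ℝ // t ≠ 0}),
        g = mcg i t * xc (i, s) * (mcg i t)⁻¹ * (xc (i, s * t.1))⁻¹} ∪
  {g | ∃ (i j : ℕ) (s : ℝ) (t : {t : ℝ // t ≠ 0}), j ≠ i ∧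
        g = mcg i t * xc (j, s) * (mcg i t)⁻¹ * (xc (j, s))⁻¹} ∪
  {g | ∃ (i : ℕ) (t : {t : ℝ // t ≠ 0}), g = mcg i t * yc * (mcg i t)⁻¹ * yc⁻¹}

/-- The presented group `C`. -/
abbrev Cgrp : Type := PresentedGroup relsC

/-- The homomorphism `π : FreeGroup X →* C` induced by the inclusion of generators. -/
noncomputable def piC : FreeGroup XT →* Cgrp :=
  FreeGroup.lift fun g => PresentedGroup.of (Sum.inl g)

/-- The image in `C` of the stable letter `a_{(i,t)}`. -/
def aC (p : ℕ × ℝ) : Cgrp := PresentedGroup.of (Sum.inr (Sum.inl p))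

def xX (p : ℕ × ℝ) : FreeGroup XT := FreeGroup.of (Sum.inl p)
def yX : FreeGroup XT := FreeGroup.of (Sum.inr ())

/-- The word `x_{(1,r_1)} ⋯ x_{(D,r_D)}` for a tuple `r ∈ ℝ^D`. -/
def cD {D : ℕ} (r : Fin D → ℝ) : FreeGroup XT :=
  (List.ofFn fun i : Fin D => xX ((i : ℕ) + 1, r i)).prod

/-- The word `w_r = x_{(D,r_D)}⁻¹ ⋯ x_{(1,r_1)}⁻¹ · y · x_{(1,r_1)} ⋯ x_{(D,r_D)}`. -/
def wD {D : ℕ} (r : Fin D → ℝ) : FreeGroup XT := (cD r)⁻¹ * yX * cD r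

/-!
The relators of `C` say that each `a_{(ℓ,t)}` and `m_{(ℓ,t)}` acts on `FreeGroup X` by relabelling
the letters `x_{(ℓ,s)}`. Hence `C` maps to the semidirect product `FreeGroup X ⋊ (ℕ → Perm ℝ)`,
with `π` becoming the left inclusion. There `L` lands in `W ⋊ {f | f i = f j}`, which is a
subgroup because such an `f` maps `W` into itself; reading off left components gives
`π⁻¹(L) ≤ W`.

Conversely, conjugating `π(w_r)` by `a_{(ℓ,t)}` adds `t` to `r_ℓ`. So the translations of `r`
that preserve `π(w_r) ∈ L` form an additive subgroup containing the translations of single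
coordinates `ℓ ∉ {i, j}` and the equal translations of coordinates `i` and `j`; it therefore
contains every `r` with `r_i = r_j`, and `π(w_0) ∈ L` yields `π(w_r) ∈ L`.
-/

open SemidirectProduct

def FreeGroup.freeGroupCongrHom (α : Type*) : Equiv.Perm α →* MulAut (FreeGroup α) where
  toFun := FreeGroup.freeGroupCongr
  map_one' := FreeGroup.freeGroupCongr_refl
  map_mul' e f := (FreeGroup.freeGroupCongr_trans f e).symm

lemma PresentedGroup.mk_mul_mul_inv_of_mem {α : Type*} {rels : Set (FreeGroup α)}
    {a x y : FreeGroup α} (h : a * x * a⁻¹ * y⁻¹ ∈ rels) :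
    mk rels a * mk rels x * (mk rels a)⁻¹ = mk rels y :=
  mul_inv_eq_one.1 (by simpa only [map_mul, map_inv] using one_of_mem h)

namespace SemidirectProduct

variable {N G : Type*} [Group N] [Group G] {φ : G →* MulAut N}

lemma inr_mul_inl_mul_inr_inv_mul_inl_inv {g : G} {n m : N} (h : φ g n = m) :
    inr g * inl n * (inr g)⁻¹ * (inl m)⁻¹ = (1 : N ⋊[φ] G) := by
  rw [← map_inv, ← inl_aut, h, mul_inv_cancel]

def subgroupOfStable (H : Subgroup N) (K : Subgroup G) (hK : ∀ g ∈ K, ∀ n ∈ H, φ g n ∈ H) :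
    Subgroup (N ⋊[φ] G) where
  carrier := {x | x.left ∈ H ∧ x.right ∈ K}
  one_mem' := ⟨H.one_mem, K.one_mem⟩
  mul_mem' hx hy := ⟨H.mul_mem hx.1 (hK _ hx.2 _ hy.1), K.mul_mem hx.2 hy.2⟩
  inv_mem' hx := ⟨hK _ (K.inv_mem hx.2) _ (H.inv_mem hx.1), K.inv_mem hx.2⟩

end SemidirectProduct

def periodSubgroup {A : Type*} [AddCommGroup A] (P : A → Prop) : AddSubgroup A where
  carrier := {v | ∀ a, P a ↔ P (a + v)}
  zero_mem' a := by rw [add_zero]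
  add_mem' {v w} hv hw a := (hv a).trans (by rw [← add_assoc]; exact hw _)
  neg_mem' {v} hv a := by rw [hv (a + -v), neg_add_cancel_right]

def relabelXT : (ℕ → Equiv.Perm ℝ) →* Equiv.Perm XT where
  toFun f := Equiv.sumCongr (Equiv.prodShear (Equiv.refl ℕ) f) (Equiv.refl Unit)
  map_one' := by ext (⟨k, s⟩ | u) <;> rfl
  map_mul' f g := by ext (⟨k, s⟩ | u) <;> rfl

noncomputable def relabel : (ℕ → Equiv.Perm ℝ) →* MulAut (FreeGroup XT) :=
  (FreeGroup.freeGroupCongrHom XT).comp relabelXT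

@[simp] lemma relabel_of_inl (f : ℕ → Equiv.Perm ℝ) (k : ℕ) (s : ℝ) :
    relabel f (FreeGroup.of (Sum.inl (k, s))) =
      (FreeGroup.of (Sum.inl (k, f k s)) : FreeGroup XT) :=
  rfl

@[simp] lemma relabel_of_inr (f : ℕ → Equiv.Perm ℝ) (u : Unit) :
    relabel f (FreeGroup.of (Sum.inr u)) = (FreeGroup.of (Sum.inr u) : FreeGroup XT) :=
  rfl

lemma relabel_wD {D : ℕ} (f : ℕ → Equiv.Perm ℝ) (r : Fin D → ℝ) :
    relabel f (wD r) = wD fun p => f (p + 1) (r p) := by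
  simp [wD, cD, xX, yX, map_list_prod, List.map_ofFn, Function.comp_def]

noncomputable def genImage : GenC → FreeGroup XT ⋊[relabel] (ℕ → Equiv.Perm ℝ) :=
  Sum.elim (fun x => inl (FreeGroup.of x)) <| Sum.elim
    (fun p => inr (Pi.mulSingle p.1 (Equiv.addRight p.2)))
    (fun q => inr (Pi.mulSingle q.1 (Equiv.mulRight₀ q.2.1 q.2.2)))

lemma lift_genImage_relsC : ∀ r ∈ relsC, FreeGroup.lift genImage r = 1 := by
  rintro r (((((⟨i, s, t, rfl⟩ | ⟨i, j, s, t, hji, rfl⟩) | ⟨i, t, rfl⟩) | ⟨i, s, t, rfl⟩) |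
    ⟨i, j, s, t, hji, rfl⟩) | ⟨i, t, rfl⟩) <;>
  · simp only [xc, yc, ac, mcg, map_mul, map_inv, FreeGroup.lift_apply_of, genImage,
      Sum.elim_inl, Sum.elim_inr]
    exact inr_mul_inl_mul_inr_inv_mul_inl_inv (by simp [*])

noncomputable def toSemidirect : Cgrp →* FreeGroup XT ⋊[relabel] (ℕ → Equiv.Perm ℝ) :=
  PresentedGroup.toGroup lift_genImage_relsC

@[simp] lemma toSemidirect_piC (f : FreeGroup XT) : toSemidirect (piC f) = inl f := by
  have : toSemidirect.comp piC = inl :=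
    FreeGroup.ext_hom _ _ fun _ => PresentedGroup.toGroup.of lift_genImage_relsC
  exact DFunLike.congr_fun this f

@[simp] lemma toSemidirect_aC (p : ℕ × ℝ) :
    toSemidirect (aC p) = inr (Pi.mulSingle p.1 (Equiv.addRight p.2)) :=
  PresentedGroup.toGroup.of lift_genImage_relsC

def wSubgroup (D i j : ℕ) : Subgroup (FreeGroup XT) :=
  Subgroup.closure
    {g : FreeGroup XT |
      ∃ r : Fin D → ℝ,
        (∀ p q : Fin D, (p : ℕ) + 1 = i → (q : ℕ) + 1 = j → r p = r q) ∧ g = wD r}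

noncomputable def lSubgroup (D i j : ℕ) : Subgroup Cgrp :=
  Subgroup.closure
    ({piC (wD fun _ : Fin D => (0 : ℝ))} ∪
     {g : Cgrp | ∃ s : ℝ, g = aC (i, s) * aC (j, s)} ∪
     {g : Cgrp | ∃ (ℓ : ℕ) (s : ℝ), ℓ ≠ i ∧ ℓ ≠ j ∧ g = aC (ℓ, s)})

lemma relabel_mem_wSubgroup {D i j : ℕ} {f : ℕ → Equiv.Perm ℝ} (hf : f i = f j)
    {g : FreeGroup XT} (hg : g ∈ wSubgroup D i j) : relabel f g ∈ wSubgroup D i j := by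
  refine (Subgroup.closure_le ((wSubgroup D i j).comap (relabel f).toMonoidHom)).2 ?_ hg
  rintro _ ⟨r, hr, rfl⟩
  refine Subgroup.subset_closure ⟨_, fun p q hp hq => ?_, relabel_wD f r⟩
  rw [hp, hq, hf, hr p q hp hq]

lemma comap_piC_lSubgroup_le {D i j : ℕ} (hij : i ≠ j) :
    (lSubgroup D i j).comap piC ≤ wSubgroup D i j := by
  let M := subgroupOfStable (wSubgroup D i j)
    (MonoidHom.eqLocus (Pi.evalMonoidHom (fun _ : ℕ => Equiv.Perm ℝ) i) (Pi.evalMonoidHom _ j))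
    fun _ hf _ hg => relabel_mem_wSubgroup (D := D) (i := i) (j := j) hf hg
  have hM {x} : x ∈ M ↔ x.left ∈ wSubgroup D i j ∧ x.right i = x.right j := Iff.rfl
  have hLM : lSubgroup D i j ≤ M.comap toSemidirect := by
    rw [lSubgroup, Subgroup.closure_le]
    rintro _ ((rfl | ⟨s, rfl⟩) | ⟨ℓ, s, hℓi, hℓj, rfl⟩)
    · simp only [SetLike.mem_coe, Subgroup.mem_comap, hM, toSemidirect_piC, left_inl, right_inl]
      exact ⟨Subgroup.subset_closure ⟨_, fun _ _ _ _ => rfl, rfl⟩, rfl⟩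
    · simp [hM, hij, hij.symm]
    · simp [hM, hℓi.symm, hℓj.symm]
  intro f hf
  simpa using (hM.1 (hLM hf)).1

lemma aC_mul_piC_mul_inv (ℓ : ℕ) (t : ℝ) (f : FreeGroup XT) :
    aC (ℓ, t) * piC f * (aC (ℓ, t))⁻¹ = piC (relabel (Pi.mulSingle ℓ (Equiv.addRight t)) f) := by
  suffices h : (MulAut.conj (aC (ℓ, t))).toMonoidHom.comp piC =
      piC.comp (relabel (Pi.mulSingle ℓ (Equiv.addRight t))).toMonoidHom from
    DFunLike.congr_fun h f
  refine FreeGroup.ext_hom _ _ ?_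
  rintro (⟨k, s⟩ | ⟨⟩) <;>
    simp only [MonoidHom.comp_apply, MulEquiv.coe_toMonoidHom, MulAut.conj_apply, relabel_of_inl,
      relabel_of_inr, piC, FreeGroup.lift_apply_of]
  · by_cases hk : k = ℓ
    · subst hk
      rw [Pi.mulSingle_eq_same, Equiv.coe_addRight]
      exact PresentedGroup.mk_mul_mul_inv_of_mem
        (Or.inl (Or.inl (Or.inl (Or.inl (Or.inl ⟨k, s, t, rfl⟩)))))
    · rw [Pi.mulSingle_eq_of_ne hk, Equiv.Perm.coe_one, id]
      exact PresentedGroup.mk_mul_mul_inv_of_mem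
        (Or.inl (Or.inl (Or.inl (Or.inl (Or.inr ⟨ℓ, k, s, t, hk, rfl⟩)))))
  · exact PresentedGroup.mk_mul_mul_inv_of_mem (Or.inl (Or.inl (Or.inl (Or.inr ⟨ℓ, t, rfl⟩))))

def singleShift (D ℓ : ℕ) (t : ℝ) : Fin D → ℝ := fun p => (Pi.single ℓ t : ℕ → ℝ) ((p : ℕ) + 1)

lemma singleShift_succ {D : ℕ} (p : Fin D) (t : ℝ) :
    singleShift D ((p : ℕ) + 1) t = Pi.single p t := by
  ext q
  simp [singleShift, Pi.single_apply, Fin.ext_iff]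

lemma relabel_addRight_wD {D : ℕ} (ℓ : ℕ) (t : ℝ) (r : Fin D → ℝ) :
    relabel (Pi.mulSingle ℓ (Equiv.addRight t)) (wD r) = wD (r + singleShift D ℓ t) := by
  rw [relabel_wD]
  congr 1
  ext p
  by_cases h : (p : ℕ) + 1 = ℓ <;> simp [singleShift, h]

lemma mem_of_singleShift_mem {D i j : ℕ} (hj : 1 ≤ j) (hjD : j ≤ D) (hij : i ≠ j)
    {V : AddSubgroup (Fin D → ℝ)}
    (hsingle : ∀ ℓ t, ℓ ≠ i → ℓ ≠ j → singleShift D ℓ t ∈ V)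
    (hpair : ∀ t, singleShift D i t + singleShift D j t ∈ V) {r : Fin D → ℝ}
    (hr : ∀ p q : Fin D, (p : ℕ) + 1 = i → (q : ℕ) + 1 = j → r p = r q) : r ∈ V := by
  set q : Fin D := ⟨j - 1, by omega⟩
  have hq : (q : ℕ) + 1 = j := by simp only [q]; omega
  set v := singleShift D i (r q) + singleShift D j (r q)
  have hvanish : ∀ p : Fin D, ((p : ℕ) + 1 = i ∨ (p : ℕ) + 1 = j) → (r - v) p = 0 := by
    rintro p (hp | hp)
    · simp [v, singleShift, hp, hij, hr p q hp hq]
    · obtain rfl : p = q := Fin.ext (by omega)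
      simp [v, singleShift, hp, hij.symm]
  rw [← add_sub_cancel v r, ← Finset.univ_sum_single (r - v)]
  refine add_mem (hpair _) (sum_mem fun p _ => ?_)
  by_cases hp : (p : ℕ) + 1 = i ∨ (p : ℕ) + 1 = j
  · rw [hvanish p hp, Pi.single_zero]
    exact zero_mem _
  · obtain ⟨hpi, hpj⟩ := not_or.1 hp
    rw [← singleShift_succ]
    exact hsingle _ _ hpi hpj

lemma singleShift_mem_periodSubgroup {D : ℕ} {L : Subgroup Cgrp} {ℓ : ℕ} {t : ℝ}
    (h : aC (ℓ, t) ∈ L) : singleShift D ℓ t ∈ periodSubgroup fun r => piC (wD r) ∈ L := by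
  intro r
  dsimp only
  rw [← L.mul_mem_cancel_right (inv_mem h), ← L.mul_mem_cancel_left h, ← mul_assoc,
    aC_mul_piC_mul_inv, relabel_addRight_wD]

lemma pairShift_mem_periodSubgroup {D : ℕ} {L : Subgroup Cgrp} {i j : ℕ} {t : ℝ}
    (h : aC (i, t) * aC (j, t) ∈ L) :
    singleShift D i t + singleShift D j t ∈ periodSubgroup fun r => piC (wD r) ∈ L := by
  intro r
  dsimp only
  rw [← L.mul_mem_cancel_right (inv_mem h), ← L.mul_mem_cancel_left h, ← mul_assoc,
    show aC (i, t) * aC (j, t) * piC (wD r) * (aC (i, t) * aC (j, t))⁻¹ =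
      aC (i, t) * (aC (j, t) * piC (wD r) * (aC (j, t))⁻¹) * (aC (i, t))⁻¹ by group,
    aC_mul_piC_mul_inv, relabel_addRight_wD, aC_mul_piC_mul_inv, relabel_addRight_wD,
    add_assoc, add_comm (singleShift D j t)]

lemma wSubgroup_le_comap_piC {D i j : ℕ} (hj : 1 ≤ j) (hjD : j ≤ D) (hij : i ≠ j) :
    wSubgroup D i j ≤ (lSubgroup D i j).comap piC := by
  rw [wSubgroup, Subgroup.closure_le]
  rintro _ ⟨r, hr, rfl⟩
  have hperiod : r ∈ periodSubgroup fun r => piC (wD r) ∈ lSubgroup D i j :=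
    mem_of_singleShift_mem hj hjD hij
      (fun ℓ t hℓi hℓj =>
        singleShift_mem_periodSubgroup (Subgroup.subset_closure (Or.inr ⟨ℓ, t, hℓi, hℓj, rfl⟩)))
      (fun t => pairShift_mem_periodSubgroup (Subgroup.subset_closure (Or.inl (Or.inr ⟨t, rfl⟩))))
      hr
  simpa using (hperiod 0).1 (Subgroup.subset_closure (Or.inl (Or.inl rfl)))

/-- For the assignment `x_i ← x_j` (`1 ≤ j < i ≤ D`): with `W` the subgroup of
`FreeGroup X` generated by `{w_r : r ∈ ℝ^D, r_i = r_j}` and `L` the subgroup of `C`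
generated by `π(w_{(0,…,0)})` together with the products `a_{(i,s)}·a_{(j,s)}` for
`s ∈ ℝ` and all `a_{(ℓ,s)}` with `ℓ ∉ {i, j}`, we have `π⁻¹(L) = W`. -/
theorem comap_piC_closure_copy_eq
    (D i j : ℕ) (hj : 1 ≤ j) (hji : j < i) (hiD : i ≤ D) :
    Subgroup.comap piC
        (Subgroup.closure
          ({piC (wD fun _ : Fin D => (0 : ℝ))} ∪
           {g : Cgrp | ∃ s : ℝ, g = aC (i, s) * aC (j, s)} ∪
           {g : Cgrp | ∃ (ℓ : ℕ) (s : ℝ), ℓ ≠ i ∧ ℓ ≠ j ∧ g = aC (ℓ, s)})) =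
      Subgroup.closure
        {g : FreeGroup XT |
          ∃ r : Fin D → ℝ,
            (∀ p q : Fin D, (p : ℕ) + 1 = i → (q : ℕ) + 1 = j → r p = r q) ∧
              g = wD r} :=
  le_antisymm (comap_piC_lSubgroup_le hji.ne') (wSubgroup_le_comap_piC hj (by omega) hji.ne')
end
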